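/- Under the extended ordering invariant, if A[i].val >_i v for some cell i, then for all cells j with h(v) ≤ j < i (cyclically), A[j].val >_j v, and A[j].next >_{j+1} v or h(A[j].next) = j+1. -/
import Mathlib


/-- The rank of `v` at cell `i`: the cyclic distance `(i - h v) mod m`. -/
def rnk {U : Type*} {m : ℕ} (h : U → Fin m) (v : U) (i : Fin m) : ℕ :=
  ((i : ℕ) + m - (h v : ℕ)) % m

/-- Cyclic distance from `a` to `b`, going forward, modulo `m`. -/
def cdist {m : ℕ} (a b : Fin m) : ℕ :=
  ((b : ℕ) + m - (a : ℕ)) % m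

/-- Robin Hood priority: `a >_i b` iff `rank(a,i) > rank(b,i)`, or equal ranks and `a > b`. -/
def prioGT {U : Type*} [LinearOrder U] {m : ℕ} (h : U → Fin m) (i : Fin m) (a b : U) : Prop :=
  rnk h a i > rnk h b i ∨ (rnk h a i = rnk h b i ∧ a > b)

/-- Priority extended to `Option U`: `none` is strictly below every `some v`. -/
def oGT {U : Type*} [LinearOrder U] {m : ℕ} (h : U → Fin m) (i : Fin m) :
    Option U → Option U → Prop
  | some a, some b => prioGT h i a b
  | some _, none => True
  | none, _ => False

/-- `x ≥_i y` : strictly higher priority, or equal. -/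
def oGE {U : Type*} [LinearOrder U] {m : ℕ} (h : U → Fin m) (i : Fin m)
    (x y : Option U) : Prop :=
  oGT h i x y ∨ x = y

/-- The Robin Hood ordering invariant: if `v` is stored at cell `i`, then every cell `j`
on the cyclic interval from `h v` to `i` (exclusive of `i`) stores a value of priority
at least that of `v` at cell `j`. -/
def OrdInv {U : Type*} [LinearOrder U] {m : ℕ} (h : U → Fin m) (A : Fin m → Option U) : Prop :=
  ∀ i v, A i = some v → ∀ j, cdist (h v) j < cdist (h v) i → oGE h j (A j) (some v)

/-- Cell marks: stable, insert in progress, delete in progress. -/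
inductive Mark
  | S | I | D
deriving DecidableEq

/-- A table cell: (value slot, lookahead slot, mark). -/
abbrev Cell (U : Type*) := Option U × Option U × Mark

/-- The extended ordering invariant for a table with lookahead. -/
def ExtInv {U : Type*} [LinearOrder U] {m : ℕ} [NeZero m] (h : U → Fin m)
    (A : Fin m → Cell U) : Prop :=
  -- (a) ordering invariant for the value slots
  (∀ i v, (A i).1 = some v → ∀ j, cdist (h v) j < cdist (h v) i →
    oGE h j ((A j).1) (some v)) ∧
  -- (b) A[i].next ≥_{i+1} A[i+1].val, or h(A[i].next) = i+1
  (∀ i : Fin m, oGE h (i + 1) ((A i).2.1) ((A (i + 1)).1) ∨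
    (∃ w, (A i).2.1 = some w ∧ h w = i + 1)) ∧
  -- (c) A[i].val ≥_i A[i].next, or (h(A[i].next) = i+1 and A[i].next ≥_{i+1} A[i+1].val)
  (∀ i : Fin m, oGE h i ((A i).1) ((A i).2.1) ∨
    ((∃ w, (A i).2.1 = some w ∧ h w = i + 1) ∧
      oGE h (i + 1) ((A i).2.1) ((A (i + 1)).1)))

/-- The (relevant part of the) stability invariant: a stable cell's lookahead slot
agrees with the value slot of the next cell. -/
def StableInv {U : Type*} {m : ℕ} [NeZero m] (A : Fin m → Cell U) : Prop :=
  ∀ i : Fin m, (A i).2.2 = Mark.S → (A i).2.1 = (A (i + 1)).1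

/-- `v` is physically in the table: some cell's value or lookahead slot equals `v`. -/
def physIn {U : Type*} {m : ℕ} (A : Fin m → Cell U) (v : U) : Prop :=
  ∃ i : Fin m, (A i).1 = some v ∨ (A i).2.1 = some v

/-- `v` is logically in the table. -/
def logIn {U : Type*} [LinearOrder U] {m : ℕ} (h : U → Fin m)
    (A : Fin m → Cell U) (v : U) : Prop :=
  ∃ i : Fin m, (A i).1 = some v ∨
    ((A i).2.1 = some v ∧ oGE h i ((A i).1) (some v))


section stmt17aux
set_option linter.unusedSectionVars false
variable {U : Type*} [LinearOrder U] {m : ℕ} [NeZero m]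

lemma stmt17_cdist_eq_val (a b : Fin m) : cdist a b = ((b - a : Fin m) : ℕ) := by
  rw [cdist, Fin.sub_def]
  congr 1
  have := a.isLt
  omega

lemma stmt17_fin_sub_val (x y : Fin m) (hle : (y : ℕ) ≤ (x : ℕ)) :
    ((x - y : Fin m) : ℕ) = (x : ℕ) - (y : ℕ) := by
  rw [Fin.sub_def]
  have hx := x.isLt
  have hy := y.isLt
  have h1 : m - (y : ℕ) + (x : ℕ) = m + ((x : ℕ) - (y : ℕ)) := by omega
  simp only [h1, Nat.add_mod_left]
  exact Nat.mod_eq_of_lt (by omega)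

lemma stmt17_cdist_inj (a b c : Fin m) (hbc : cdist a b = cdist a c) : b = c := by
  rw [stmt17_cdist_eq_val, stmt17_cdist_eq_val] at hbc
  have : b - a = c - a := Fin.val_injective hbc
  exact sub_left_injective this

lemma stmt17_cdist_shift (a c j i : Fin m) (hlt : cdist a j < cdist a i)
    (hge : cdist a i ≤ cdist c i) :
    cdist c j = cdist c i - (cdist a i - cdist a j) := by
  have h1 : (i - j : Fin m) = (i - a) - (j - a) := by abel
  have h2 : ((i - j : Fin m) : ℕ) = cdist a i - cdist a j := by
    rw [h1, stmt17_fin_sub_val]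
    · rw [stmt17_cdist_eq_val, stmt17_cdist_eq_val]
    · rw [stmt17_cdist_eq_val, stmt17_cdist_eq_val] at hlt; omega
  have h3 : (j - c : Fin m) = (i - c) - (i - j) := by abel
  have hic : ((i - c : Fin m) : ℕ) = cdist c i := (stmt17_cdist_eq_val c i).symm
  have hjc : ((j - c : Fin m) : ℕ) = cdist c j := (stmt17_cdist_eq_val c j).symm
  have hle : ((i - j : Fin m) : ℕ) ≤ ((i - c : Fin m) : ℕ) := by omega
  have e2 : ((j - c : Fin m) : ℕ) = ((i - c : Fin m) : ℕ) - ((i - j : Fin m) : ℕ) := by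
    rw [h3]; exact stmt17_fin_sub_val _ _ hle
  omega

lemma stmt17_cdist_succ (a j : Fin m) (hlt : cdist a j + 1 < m) :
    cdist a (j + 1) = cdist a j + 1 := by
  rw [stmt17_cdist_eq_val, stmt17_cdist_eq_val]
  have h1 : (j + 1 - a : Fin m) = (j - a) + 1 := by abel
  rw [h1, Fin.val_add]
  have h2 : ((1 : Fin m) : ℕ) = 1 % m := Fin.val_one' m
  rw [stmt17_cdist_eq_val] at hlt
  have := (j - a).isLt
  rw [h2]
  have hm : 1 % m = 1 := Nat.mod_eq_of_lt (by omega)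
  rw [hm, Nat.mod_eq_of_lt (by omega)]

lemma stmt17_cdist_lt (a b : Fin m) : cdist a b < m :=
  Nat.mod_lt _ (Nat.pos_of_ne_zero (by have := b.isLt; omega))

lemma stmt17_rnk_eq (h : U → Fin m) (v : U) (i : Fin m) : rnk h v i = cdist (h v) i := rfl

lemma stmt17_prioGT_trans {h : U → Fin m} {i : Fin m} {a b c : U}
    (h1 : prioGT h i a b) (h2 : prioGT h i b c) : prioGT h i a c := by
  rcases h1 with h1 | ⟨h1e, h1l⟩ <;> rcases h2 with h2 | ⟨h2e, h2l⟩
  · left; omega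
  · left; omega
  · left; omega
  · exact Or.inr ⟨h1e.trans h2e, lt_trans h2l h1l⟩

lemma stmt17_oGE_oGT_trans {h : U → Fin m} {k : Fin m} {x y : Option U} {v : U}
    (h1 : oGE h k x y) (h2 : oGT h k y (some v)) : oGT h k x (some v) := by
  cases y with
  | none => exact absurd h2 (by simp [oGT])
  | some b =>
    cases x with
    | none =>
      rcases h1 with h1 | h1
      · exact absurd h1 (by simp [oGT])
      · exact absurd h1 (by simp)
    | some a =>
      rcases h1 with h1 | h1
      · exact stmt17_prioGT_trans h1 h2
      · rw [h1]; exact h2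

end stmt17aux

theorem stmt17 {U : Type*} [LinearOrder U] {m : ℕ} [NeZero m] (h : U → Fin m)
    (A : Fin m → Cell U) (hext : ExtInv h A)
    (v : U) (i : Fin m)
    -- A[i].val >_i v
    (hgt : oGT h i ((A i).1) (some v)) :
    -- for all j with h(v) ≤ j < i cyclically
    ∀ j : Fin m, cdist (h v) j < cdist (h v) i →
      oGT h j ((A j).1) (some v) ∧
      (oGT h (j + 1) ((A j).2.1) (some v) ∨ (∃ w, (A j).2.1 = some w ∧ h w = j + 1)) := by
  obtain ⟨ha, hb, -⟩ := hext
  obtain ⟨u, hAi⟩ : ∃ u, (A i).1 = some u := by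
    cases hA : (A i).1 with
    | none => rw [hA] at hgt; exact absurd hgt (by simp [oGT])
    | some u => exact ⟨u, rfl⟩
  have huv : prioGT h i u v := by rw [hAi] at hgt; exact hgt
  have hge : cdist (h v) i ≤ cdist (h u) i := by
    rw [← stmt17_rnk_eq, ← stmt17_rnk_eq]
    rcases huv with h1 | ⟨h1, -⟩ <;> omega
  have key : ∀ j : Fin m, cdist (h v) j < cdist (h v) i → oGT h j ((A j).1) (some v) := by
    intro j hj
    have hsh := stmt17_cdist_shift (h v) (h u) j i hj hge
    have hjlt : cdist (h u) j < cdist (h u) i := by omega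
    have haj := ha i u hAi j hjlt
    have hpj : prioGT h j u v := by
      have r1 : rnk h u j = cdist (h u) j := rfl
      have r2 : rnk h v j = cdist (h v) j := rfl
      have r3 : rnk h u i = cdist (h u) i := rfl
      have r4 : rnk h v i = cdist (h v) i := rfl
      rcases huv with h1 | ⟨h1, h2⟩
      · left; omega
      · exact Or.inr ⟨by omega, h2⟩
    exact stmt17_oGE_oGT_trans haj hpj
  intro j hj
  have hdm := stmt17_cdist_lt (h v) i
  have hsucc := stmt17_cdist_succ (h v) j (by omega)
  have hj1 : oGT h (j + 1) ((A (j + 1)).1) (some v) := by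
    rcases lt_or_eq_of_le (show cdist (h v) (j + 1) ≤ cdist (h v) i from by omega) with hlt | heq
    · exact key (j + 1) hlt
    · rw [stmt17_cdist_inj (h v) (j + 1) i heq]; exact hgt
  refine ⟨key j hj, ?_⟩
  rcases hb j with hob | hw
  · exact Or.inl (stmt17_oGE_oGT_trans hob hj1)
  · exact Or.inr hw
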